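/- Let n ≥ 3 and ω > 0 be fixed, and for r > 0 set R(r) = (r^n + ω/ω_n)^{1/n}, so that the shell A_{r,R(r)} has volume ω. Then σ₁(A_{r,R(r)}) = (n−2) / ( R(r) ( (R(r)/r)^{n−2} − 1 ) ) tends to +∞ as r → +∞; more precisely, σ₁(A_{r,R(r)}) is asymptotic to (n ω_n / ω) r^{n−1} as r → +∞. -/

import Mathlib

open Filter

noncomputable section

/-- Euclidean space `ℝ^n`. -/
abbrev Euc (n : ℕ) := EuclideanSpace ℝ (Fin n)

/-- `ω_n`, the volume of the unit ball in `ℝ^n`. -/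
def unitBallVol (n : ℕ) : ℝ :=
  (MeasureTheory.volume (Metric.ball (0 : Euc n) 1)).toReal

/-- The outer radius making the shell `A_{r,R(r)}` have volume `ω`: `R(r) = (rⁿ + ω/ω_n)^{1/n}`. -/
def outerRadius (n : ℕ) (ω r : ℝ) : ℝ := (r ^ n + ω / unitBallVol n) ^ (1 / (n : ℝ))

/-!
Put `c = ω / ω_n` and `u = c / rⁿ`, so that `R(r) = r (1 + u)^{1/n}` and `(R/r)^{n-2} = (1 + u)^β`
with `β = (n - 2)/n`. The ratio in question becomes `β u / ((1 + u)^{1/n} ((1 + u)^β - 1))`, which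
tends to `1` as `u → 0` because `((1 + u)^β - 1)/u` is a difference quotient of `x ↦ x^β` at `1`.
Since `u → 0` as `r → ∞` and `r^{n-1} → ∞`, both claims follow.
-/

open Topology Asymptotics

theorem unitBallVol_pos (n : ℕ) : 0 < unitBallVol n :=
  ENNReal.toReal_pos (Metric.measure_ball_pos _ _ one_pos).ne' MeasureTheory.measure_ball_lt_top.ne

theorem tendsto_one_add_rpow_sub_one_div (β : ℝ) :
    Tendsto (fun u : ℝ => ((1 + u) ^ β - 1) / u) (𝓝[≠] 0) (𝓝 β) := by
  have hderiv : HasDerivAt (fun u : ℝ => (1 + u) ^ β) β 0 := by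
    simpa using ((hasDerivAt_id (0 : ℝ)).const_add 1).rpow_const (p := β) (Or.inl (by norm_num))
  refine hderiv.tendsto_slope.congr fun u => ?_
  simp [slope_fun_def_field]

theorem tendsto_mul_div_one_add_rpow_mul_one_add_rpow_sub_one {β : ℝ} (hβ : β ≠ 0) (γ : ℝ) :
    Tendsto (fun u : ℝ => β * u / ((1 + u) ^ γ * ((1 + u) ^ β - 1))) (𝓝[≠] 0) (𝓝 1) := by
  have hfactor : Tendsto (fun u : ℝ => (1 + u) ^ γ) (𝓝[≠] 0) (𝓝 1) := by
    have hcont : ContinuousAt (fun u : ℝ => (1 + u) ^ γ) 0 :=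
      (continuousAt_const.add continuousAt_id).rpow_const (Or.inl (by norm_num))
    simpa using hcont.tendsto.mono_left nhdsWithin_le_nhds
  have hlim := (tendsto_const_nhds (x := β)).mul
    (((tendsto_one_add_rpow_sub_one_div β).inv₀ hβ).mul (hfactor.inv₀ one_ne_zero))
  rw [inv_one, mul_one, mul_inv_cancel₀ hβ] at hlim
  refine hlim.congr fun u => ?_
  simp only [div_eq_mul_inv, mul_inv, inv_inv]
  ring

theorem outerRadius_eq_mul {n : ℕ} (hn : n ≠ 0) {ω r : ℝ} (hω : 0 ≤ ω) (hr : 0 < r) :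
    outerRadius n ω r = r * (1 + ω / unitBallVol n / r ^ n) ^ (1 / (n : ℝ)) := by
  have hrn : 0 < r ^ n := pow_pos hr n
  have hc : 0 ≤ ω / unitBallVol n := div_nonneg hω ENNReal.toReal_nonneg
  have hfactor : r ^ n + ω / unitBallVol n = r ^ n * (1 + ω / unitBallVol n / r ^ n) := by
    field_simp
  rw [outerRadius, hfactor, Real.mul_rpow hrn.le (by positivity), one_div,
    Real.pow_rpow_inv_natCast hr.le hn]

theorem shell_eigenvalue_ratio_eq {n : ℕ} (hn : 2 ≤ n) {ω r : ℝ} (hω : 0 ≤ ω) (hr : 0 < r) :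
    ((n : ℝ) - 2) / (outerRadius n ω r * ((outerRadius n ω r / r) ^ (n - 2) - 1)) /
        (((n : ℝ) * unitBallVol n / ω) * r ^ (n - 1)) =
      ((n : ℝ) - 2) / n * (ω / unitBallVol n / r ^ n) /
        ((1 + ω / unitBallVol n / r ^ n) ^ (1 / (n : ℝ)) *
          ((1 + ω / unitBallVol n / r ^ n) ^ (((n : ℝ) - 2) / n) - 1)) := by
  set u := ω / unitBallVol n / r ^ n
  have hu : 0 ≤ u := by have := unitBallVol_pos n; positivity
  have hR : outerRadius n ω r = r * (1 + u) ^ (1 / (n : ℝ)) := outerRadius_eq_mul (by omega) hω hr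
  have hquot : outerRadius n ω r / r = (1 + u) ^ (1 / (n : ℝ)) := by
    rw [hR, mul_div_cancel_left₀ _ hr.ne']
  have hpow : ((1 + u) ^ (1 / (n : ℝ))) ^ (n - 2) = (1 + u) ^ (((n : ℝ) - 2) / n) := by
    rw [← Real.rpow_natCast, ← Real.rpow_mul (by linarith), Nat.cast_sub hn]
    push_cast
    ring_nf
  rw [hquot, hR, hpow]
  simp only [u, ← pow_sub_one_mul (by omega : n ≠ 0) r]
  simp only [div_eq_mul_inv, mul_inv, inv_inv]
  ring

theorem tendsto_const_div_pow_atTop_nhdsNE_zero {c : ℝ} (hc : c ≠ 0) {n : ℕ} (hn : n ≠ 0) :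
    Tendsto (fun r : ℝ => c / r ^ n) atTop (𝓝[≠] 0) :=
  tendsto_nhdsWithin_iff.2 ⟨(tendsto_pow_atTop hn).const_div_atTop c,
    (eventually_gt_atTop 0).mono fun _ hr => div_ne_zero hc (pow_pos hr n).ne'⟩

theorem tendsto_shell_eigenvalue_ratio {n : ℕ} (hn : 3 ≤ n) {ω : ℝ} (hω : 0 < ω) :
    Tendsto (fun r : ℝ =>
        (((n : ℝ) - 2) / (outerRadius n ω r * ((outerRadius n ω r / r) ^ (n - 2) - 1))) /
          (((n : ℝ) * unitBallVol n / ω) * r ^ (n - 1)))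
      atTop (𝓝 1) := by
  have hβ : ((n : ℝ) - 2) / n ≠ 0 := by
    have : (3 : ℝ) ≤ n := by exact_mod_cast hn
    exact div_ne_zero (by linarith) (by linarith)
  have hu := tendsto_const_div_pow_atTop_nhdsNE_zero (div_pos hω (unitBallVol_pos n)).ne'
    (by omega : n ≠ 0)
  refine ((tendsto_mul_div_one_add_rpow_mul_one_add_rpow_sub_one hβ (1 / (n : ℝ))).comp
    hu).congr' ?_
  filter_upwards [eventually_gt_atTop 0] with r hr
  exact (shell_eigenvalue_ratio_eq (by omega) hω.le hr).symm

/-- Let `n ≥ 3` and `ω > 0`; for `r > 0` set `R(r) = (rⁿ + ω/ω_n)^{1/n}`.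
Then `σ₁(A_{r,R(r)}) = (n-2)/(R(r)((R(r)/r)^{n-2} - 1))` tends to `+∞` as `r → +∞`;
more precisely it is asymptotic to `(n ω_n/ω) r^{n-1}`, i.e. the ratio tends to `1`. -/
theorem shell_eigenvalue_volume_constraint_tendsto_atTop (n : ℕ) (hn : 3 ≤ n)
    (ω : ℝ) (hω : 0 < ω) :
    Tendsto (fun r : ℝ =>
        ((n : ℝ) - 2) / (outerRadius n ω r * ((outerRadius n ω r / r) ^ (n - 2) - 1)))
      atTop atTop ∧
    Tendsto (fun r : ℝ =>
        (((n : ℝ) - 2) / (outerRadius n ω r * ((outerRadius n ω r / r) ^ (n - 2) - 1))) /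
          (((n : ℝ) * unitBallVol n / ω) * r ^ (n - 1)))
      atTop (nhds 1) := by
  have hratio := tendsto_shell_eigenvalue_ratio hn hω
  have hscale : Tendsto (fun r : ℝ => ((n : ℝ) * unitBallVol n / ω) * r ^ (n - 1)) atTop atTop :=
    (tendsto_pow_atTop (by omega)).const_mul_atTop (by have := unitBallVol_pos n; positivity)
  exact ⟨(isEquivalent_of_tendsto_one hratio).symm.tendsto_atTop hscale, hratio⟩

end
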